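/- Let R be a Q-algebra and let π₀, …, πₙ ∈ R be idempotents with πᵢ·πⱼ = 0 for all i < j. Then iterating the non-commutative Gram–Schmidt process n times produces elements p₀, …, pₙ ∈ R that are mutually orthogonal idempotents (pᵢ·pⱼ = 0 for all i ≠ j), where one pass of the process replaces a family (q₀, …, qₙ) by (q'₀, …, q'ₙ) with q'ᵢ := (1 − (1/2)qₙ) ⋯ (1 − (1/2)q_{i+1}) · qᵢ · (1 − (1/2)q_{i−1}) ⋯ (1 − (1/2)q₀). -/

import Mathlib

/-- One pass of the non-commutative Gram--Schmidt process:
`q'ᵢ := (1 - (1/2)qₙ) ⋯ (1 - (1/2)q_{i+1}) · qᵢ · (1 - (1/2)q_{i-1}) ⋯ (1 - (1/2)q₀)`. -/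
def gramSchmidtPass {R : Type*} [Ring R] [Algebra ℚ R] (n : ℕ) (q : ℕ → R) : ℕ → R :=
  fun i =>
    (((List.range (n - i)).map (fun t => 1 - (2:ℚ)⁻¹ • q (n - t))).prod) * q i *
      (((List.range i).reverse.map (fun t => 1 - (2:ℚ)⁻¹ • q t)).prod)

/-!
Write one pass as `q'ᵢ = Lᵢ qᵢ Bᵢ` with `Bᵢ = (1 - ½qᵢ₋₁) ⋯ (1 - ½q₀)` and
`Lᵢ = (1 - ½qₙ) ⋯ (1 - ½qᵢ₊₁)`. A factor `1 - ½qₜ` is absorbed by `x` on its right (left) as soon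
as `qₜ x = 0` (`x qₜ = 0`). One-sided orthogonality therefore gives `Bᵢ qᵢ = qᵢ` and
`qᵢ Bᵢ Lⱼ = qᵢ Bᵢ` for `i ≤ j`, so the `q'ᵢ` are idempotent and `q'ᵢ q'ⱼ = 0` for `i < j`. For `j < i`
with `qᵢ` already orthogonal to everything strictly between, all factors between `j` and `i` are
absorbed and `q'ᵢ q'ⱼ` reduces to `qᵢ (1 - ½qⱼ) (1 - ½qᵢ) qⱼ = qᵢqⱼ - ½qᵢqⱼ - ½qᵢqⱼ = 0`, using
`qⱼqᵢ = 0`. Each pass thus widens the band of orthogonal pairs by one, and `n` passes reach all pairs.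
-/

namespace GramSchmidt

variable {R : Type*} [Ring R]

/-- The paper's orthogonality for `i - j < k + 1`: `k = 0` is one-sided orthogonality and `k = n` is
mutual orthogonality of `q 0, …, q n`. -/
def IsOrthogonalUpTo (n k : ℕ) (q : ℕ → R) : Prop :=
  ∀ i ≤ n, ∀ j ≤ n, i ≠ j → i ≤ j + k → q i * q j = 0

theorem IsOrthogonalUpTo.mul_eq_zero_of_lt {n k : ℕ} {q : ℕ → R} (h : IsOrthogonalUpTo n k q)
    {i j : ℕ} (hij : i < j) (hj : j ≤ n) : q i * q j = 0 :=
  h i (by omega) j hj (by omega) (by omega)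

theorem isOrthogonalUpTo_zero_iff {n : ℕ} {q : ℕ → R} :
    IsOrthogonalUpTo n 0 q ↔ ∀ i ≤ n, ∀ j ≤ n, i < j → q i * q j = 0 :=
  ⟨fun h i _ j hj hij => h.mul_eq_zero_of_lt hij hj,
    fun h i hi j hj hij hij0 => h i hi j hj (by omega)⟩

variable [Algebra ℚ R]

theorem _root_.IsIdempotentElem.mul_one_sub_half_mul_one_sub_half_mul_eq_zero {e f : R}
    (he : IsIdempotentElem e) (hf : IsIdempotentElem f) (hfe : f * e = 0) :
    e * (1 - (2:ℚ)⁻¹ • f) * ((1 - (2:ℚ)⁻¹ • e) * f) = 0 := by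
  have hefef : e * f * (e * f) = 0 := by rw [mul_assoc, ← mul_assoc f, hfe, zero_mul, mul_zero]
  have hexpand : e * (1 - (2:ℚ)⁻¹ • f) * ((1 - (2:ℚ)⁻¹ • e) * f) =
      e * f - (2:ℚ)⁻¹ • (e * e * f) - (2:ℚ)⁻¹ • (e * f * f) +
        ((2:ℚ)⁻¹ * (2:ℚ)⁻¹) • (e * f * (e * f)) := by
    simp only [mul_sub, sub_mul, mul_one, one_mul, mul_smul_comm, smul_mul_assoc, mul_assoc]
    module
  rw [hexpand, he.eq, mul_assoc, hf.eq, hefef, smul_zero, add_zero, sub_sub, ← add_smul]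
  norm_num

/-- The descending product `(1 - ½ q (b-1)) ⋯ (1 - ½ q a)`. -/
def descProd (q : ℕ → R) (a b : ℕ) : R :=
  ((List.range' a (b - a)).reverse.map fun t => 1 - (2:ℚ)⁻¹ • q t).prod

theorem descProd_mul_of_forall {q : ℕ → R} {a b : ℕ} {x : R}
    (h : ∀ t, a ≤ t → t < b → q t * x = 0) : descProd q a b * x = x := by
  refine List.prod_induction (fun y => y * x = x) (fun y z hy hz => by rw [mul_assoc, hz, hy])
    (one_mul x) ?_
  simp only [List.mem_map, List.mem_reverse, List.mem_range'_1]
  rintro _ ⟨t, ⟨hat, htb⟩, rfl⟩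
  rw [sub_mul, one_mul, smul_mul_assoc, h t hat (by omega), smul_zero, sub_zero]

theorem mul_descProd_of_forall {q : ℕ → R} {a b : ℕ} {x : R}
    (h : ∀ t, a ≤ t → t < b → x * q t = 0) : x * descProd q a b = x := by
  refine List.prod_induction (fun y => x * y = x) (fun y z hy hz => by rw [← mul_assoc, hy, hz])
    (mul_one x) ?_
  simp only [List.mem_map, List.mem_reverse, List.mem_range'_1]
  rintro _ ⟨t, ⟨hat, htb⟩, rfl⟩
  rw [mul_sub, mul_one, mul_smul_comm, h t hat (by omega), smul_zero, sub_zero]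

theorem descProd_trans (q : ℕ → R) {a b c : ℕ} (hab : a ≤ b) (hbc : b ≤ c) :
    descProd q a c = descProd q b c * descProd q a b := by
  have hrange := List.range'_append (s := a) (m := b - a) (n := c - b) (step := 1)
  rw [show a + 1 * (b - a) = b by omega, show b - a + (c - b) = c - a by omega] at hrange
  rw [descProd, descProd, descProd, ← List.prod_append, ← List.map_append, ← List.reverse_append,
    hrange]

theorem descProd_succ_self (q : ℕ → R) (a : ℕ) : descProd q a (a + 1) = 1 - (2:ℚ)⁻¹ • q a := by
  simp [descProd]

theorem gramSchmidtPass_eq {n : ℕ} (q : ℕ → R) {i : ℕ} (hi : i ≤ n) :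
    gramSchmidtPass n q i = descProd q (i + 1) (n + 1) * q i * descProd q 0 i := by
  rw [gramSchmidtPass, descProd, descProd, Nat.sub_zero, ← List.range_eq_range',
    show n + 1 - (i + 1) = n - i by omega, List.reverse_range', List.map_map]
  congr 3
  refine List.map_congr_left fun t ht => ?_
  rw [Function.comp_apply, show i + 1 + (n - i) - 1 - t = n - t by omega]

section Pass

variable {n k : ℕ} {q : ℕ → R}

theorem descProd_mul_of_le (h : IsOrthogonalUpTo n k q) (a : ℕ) {b m : ℕ} (hbm : b ≤ m)
    (hm : m ≤ n) : descProd q a b * q m = q m :=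
  descProd_mul_of_forall fun _ _ htb => h.mul_eq_zero_of_lt (by omega) hm

theorem mul_descProd_mul_of_lt (h : IsOrthogonalUpTo n k q) {i m : ℕ} (him : i < m)
    (hm : m ≤ n) : q i * descProd q 0 i * q m = 0 := by
  rw [mul_assoc, descProd_mul_of_le h 0 him.le hm, h.mul_eq_zero_of_lt him hm]

theorem mul_descProd_mul_descProd (h : IsOrthogonalUpTo n k q) {i a : ℕ} (hia : i < a) :
    q i * descProd q 0 i * descProd q a (n + 1) = q i * descProd q 0 i :=
  mul_descProd_of_forall fun _ hat htn => mul_descProd_mul_of_lt h (by omega) (by omega)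

theorem isIdempotentElem_gramSchmidtPass (hidem : ∀ i ≤ n, IsIdempotentElem (q i))
    (h : IsOrthogonalUpTo n k q) {i : ℕ} (hi : i ≤ n) :
    IsIdempotentElem (gramSchmidtPass n q i) := by
  rw [IsIdempotentElem, gramSchmidtPass_eq q hi]
  set L := descProd q (i + 1) (n + 1)
  set B := descProd q 0 i
  have hqB : q i * B * (q i * B) = q i * B := by
    rw [mul_assoc, ← mul_assoc B, descProd_mul_of_le h 0 le_rfl hi, ← mul_assoc, (hidem i hi).eq]
  calc L * q i * B * (L * q i * B) = L * ((q i * B * L) * (q i * B)) := by simp only [mul_assoc]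
    _ = L * q i * B := by
      rw [mul_descProd_mul_descProd h (Nat.lt_succ_self i), hqB, ← mul_assoc]

theorem gramSchmidtPass_mul_of_lt (h : IsOrthogonalUpTo n k q) {i j : ℕ} (hij : i < j)
    (hj : j ≤ n) : gramSchmidtPass n q i * gramSchmidtPass n q j = 0 := by
  rw [gramSchmidtPass_eq q (hij.le.trans hj), gramSchmidtPass_eq q hj]
  calc _ = descProd q (i + 1) (n + 1) *
        ((q i * descProd q 0 i * descProd q (j + 1) (n + 1)) * q j * descProd q 0 j) := by
        simp only [mul_assoc]
    _ = 0 := by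
      rw [mul_descProd_mul_descProd h (by omega), mul_descProd_mul_of_lt h hij hj, zero_mul,
        mul_zero]

theorem gramSchmidtPass_mul_of_gt (hidem : ∀ i ≤ n, IsIdempotentElem (q i))
    (h : IsOrthogonalUpTo n k q) {i j : ℕ} (hji : j < i) (hik : i ≤ j + (k + 1)) (hi : i ≤ n) :
    gramSchmidtPass n q i * gramSchmidtPass n q j = 0 := by
  set L := descProd q (i + 1) (n + 1)
  set B := descProd q 0 j
  have hleft : q i * descProd q 0 i = q i * (1 - (2:ℚ)⁻¹ • q j) * B := by
    have hqi : q i * descProd q (j + 1) i = q i :=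
      mul_descProd_of_forall fun t hjt hti => h i hi t (by omega) (by omega) (by omega)
    rw [descProd_trans q (Nat.zero_le (j + 1)) (by omega : j + 1 ≤ i),
      descProd_trans q (Nat.zero_le j) (Nat.le_succ j), descProd_succ_self, ← mul_assoc,
      ← mul_assoc, hqi]
  have hright : descProd q (j + 1) (n + 1) * q j = L * ((1 - (2:ℚ)⁻¹ • q i) * q j) := by
    have hqj : descProd q (j + 1) i * q j = q j :=
      descProd_mul_of_forall fun t hjt hti => h t (by omega) j (by omega) (by omega) (by omega)
    rw [descProd_trans q (by omega : j + 1 ≤ i + 1) (by omega : i + 1 ≤ n + 1),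
      descProd_trans q (by omega : j + 1 ≤ i) (Nat.le_succ i), descProd_succ_self, mul_assoc,
      mul_assoc, hqj]
  have hB : B * ((1 - (2:ℚ)⁻¹ • q i) * q j) = (1 - (2:ℚ)⁻¹ • q i) * q j := by
    rw [sub_mul, one_mul, smul_mul_assoc, mul_sub, mul_smul_comm, ← mul_assoc B,
      descProd_mul_of_le h 0 le_rfl (by omega), descProd_mul_of_le h 0 hji.le hi]
  have hcore : q i * (1 - (2:ℚ)⁻¹ • q j) * ((1 - (2:ℚ)⁻¹ • q i) * q j) = 0 :=
    (hidem i hi).mul_one_sub_half_mul_one_sub_half_mul_eq_zero (hidem j (by omega))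
      (h.mul_eq_zero_of_lt hji hi)
  rw [gramSchmidtPass_eq q hi, gramSchmidtPass_eq q (by omega)]
  calc L * q i * descProd q 0 i * (descProd q (j + 1) (n + 1) * q j * B)
      = L * ((q i * descProd q 0 i * L) * ((1 - (2:ℚ)⁻¹ • q i) * q j)) * B := by
        rw [hright]; simp only [mul_assoc]
    _ = L * (q i * (1 - (2:ℚ)⁻¹ • q j) * (B * ((1 - (2:ℚ)⁻¹ • q i) * q j))) * B := by
        rw [mul_descProd_mul_descProd h (Nat.lt_succ_self i), hleft]; simp only [mul_assoc]
    _ = 0 := by rw [hB, hcore, mul_zero, zero_mul]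

theorem isOrthogonalUpTo_succ_gramSchmidtPass (hidem : ∀ i ≤ n, IsIdempotentElem (q i))
    (h : IsOrthogonalUpTo n k q) : IsOrthogonalUpTo n (k + 1) (gramSchmidtPass n q) := by
  intro i hi j hj hij hik
  rcases hij.lt_or_gt with hij | hji
  · exact gramSchmidtPass_mul_of_lt h hij hj
  · exact gramSchmidtPass_mul_of_gt hidem h hji hik hi

theorem iterate_gramSchmidtPass {n : ℕ} {π : ℕ → R} (hidem : ∀ i ≤ n, IsIdempotentElem (π i))
    (h : IsOrthogonalUpTo n 0 π) (m : ℕ) :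
    (∀ i ≤ n, IsIdempotentElem ((gramSchmidtPass n)^[m] π i)) ∧
      IsOrthogonalUpTo n m ((gramSchmidtPass n)^[m] π) := by
  induction m with
  | zero => exact ⟨hidem, h⟩
  | succ m ih =>
    rw [Function.iterate_succ_apply']
    exact ⟨fun i hi => isIdempotentElem_gramSchmidtPass ih.1 ih.2 hi,
      isOrthogonalUpTo_succ_gramSchmidtPass ih.1 ih.2⟩

end Pass

end GramSchmidt

theorem gram_schmidt_iterated {R : Type*} [Ring R] [Algebra ℚ R]
    (n : ℕ) (π : ℕ → R)
    (hidem : ∀ i ≤ n, π i * π i = π i)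
    (horth : ∀ i ≤ n, ∀ j ≤ n, i < j → π i * π j = 0) :
    let p := (gramSchmidtPass n)^[n] π
    (∀ i ≤ n, p i * p i = p i) ∧
      (∀ i ≤ n, ∀ j ≤ n, i ≠ j → p i * p j = 0) := by
  obtain ⟨hpidem, hporth⟩ :=
    GramSchmidt.iterate_gramSchmidtPass hidem (GramSchmidt.isOrthogonalUpTo_zero_iff.mpr horth) n
  exact ⟨hpidem, fun i hi j hj hij => hporth i hi j hj hij (by omega)⟩
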